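/- Let \kappa_l denote the coefficients of \Phi_2, the unique power series with \Phi_2(0)=1 satisfying q\Phi_2^2+(1-2q-q^3)\Phi_2-1=0. Then for all l \geq 6, (l+1)\kappa_l + 4(l-2)\kappa_{l-2} - (2l-7)\kappa_{l-3} + 4(l-5)\kappa_{l-4} + (l-8)\kappa_{l-6} = 0. -/

import Mathlib

/-!
With `P = 1 - 2X - X³`, the quadratic equation says that `y = 2XΦ + P` is a square root of the
discriminant `D = P² + 4X = 1 + 4X² - 2X³ + 4X⁴ + X⁶`. Differentiating `y² = D` and multiplying
by `y` gives `2 D y' = D' y`, a first-order linear differential equation for `Φ` with polynomial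
coefficients whose right-hand side has degree 3. Comparing coefficients of `X^l` for `l ≥ 6`
yields the recurrence.
-/

open PowerSeries

@[simp]
theorem Derivation.map_ofNat {R A M : Type*} [CommSemiring R] [CommSemiring A] [Algebra R A]
    [AddCommMonoid M] [Module A M] [Module R M] (D : Derivation R A M) (n : ℕ) [n.AtLeastTwo] :
    D (ofNat(n) : A) = 0 :=
  D.map_natCast n

theorem Derivation.two_mul_mul_map_eq_map_mul_of_sq_eq {R A : Type*} [CommSemiring R]
    [CommRing A] [Algebra R A] (D : Derivation R A A) {f g : A} (h : f ^ 2 = g) :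
    2 * g * D f = D g * f := by
  rw [← h, D.leibniz_pow, smul_eq_mul, nsmul_eq_mul]
  push_cast
  ring

theorem PowerSeries.coeff_ofNat_mul {R : Type*} [Semiring R] (n : ℕ) [n.AtLeastTwo] (f : R⟦X⟧)
    (m : ℕ) : coeff m (ofNat(n) * f) = ofNat(n) * coeff m f := by
  rw [← map_ofNat C n, coeff_C_mul]

theorem PowerSeries.coeff_X_mul_derivative {R : Type*} [CommSemiring R] (f : R⟦X⟧) (n : ℕ) :
    coeff n (X * d⁄dX R f) = n * coeff n f := by
  cases n with
  | zero => simp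
  | succ n => rw [coeff_succ_X_mul, coeff_derivative, mul_comm]; push_cast; rfl

theorem silver_sq_eq {Φ : ℚ⟦X⟧} (hΦ : X * Φ ^ 2 + (1 - 2 * X - X ^ 3) * Φ - 1 = 0) :
    (2 * X * Φ + (1 - 2 * X - X ^ 3)) ^ 2 = 1 + 4 * X ^ 2 - 2 * X ^ 3 + 4 * X ^ 4 + X ^ 6 := by
  linear_combination 4 * X * hΦ

theorem silver_ode {Φ : ℚ⟦X⟧} (hΦ : X * Φ ^ 2 + (1 - 2 * X - X ^ 3) * Φ - 1 = 0) :
    X * (1 + 4 * X ^ 2 - 2 * X ^ 3 + 4 * X ^ 4 + X ^ 6) * d⁄dX ℚ Φ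
      + (1 + X ^ 3 - 4 * X ^ 4 - 2 * X ^ 6) * Φ = 1 + 2 * X + 5 * X ^ 3 := by
  have h := (d⁄dX ℚ).two_mul_mul_map_eq_map_mul_of_sq_eq (silver_sq_eq hΦ)
  simp only [map_add, map_sub, Derivation.leibniz, Derivation.leibniz_pow, derivative_X,
    Derivation.map_one_eq_zero, Derivation.map_ofNat, smul_eq_mul, nsmul_eq_mul] at h
  have h4 : (4 : ℚ⟦X⟧) ≠ 0 := by
    rw [← map_ofNat C 4]
    exact (map_ne_zero_iff C C_injective).mpr four_ne_zero
  refine mul_left_cancel₀ h4 ?_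
  linear_combination h

theorem stmt_8_general (Φ : ℚ⟦X⟧)
    (hΦ : X * Φ ^ 2 + (1 - 2 * X - X ^ 3) * Φ - 1 = 0) :
    ∀ l : ℕ, 6 ≤ l →
      ((l : ℚ) + 1) * coeff l Φ + 4 * ((l : ℚ) - 2) * coeff (l - 2) Φ
        - (2 * (l : ℚ) - 7) * coeff (l - 3) Φ + 4 * ((l : ℚ) - 5) * coeff (l - 4) Φ
        + ((l : ℚ) - 8) * coeff (l - 6) Φ = 0 := by
  intro l hl
  obtain ⟨k, rfl⟩ := Nat.exists_eq_add_of_le' hl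
  have h := congrArg (coeff (k + 6)) (silver_ode hΦ)
  rw [show X * (1 + 4 * X ^ 2 - 2 * X ^ 3 + 4 * X ^ 4 + X ^ 6) * d⁄dX ℚ Φ
      + (1 + X ^ 3 - 4 * X ^ 4 - 2 * X ^ 6) * Φ
      = X * d⁄dX ℚ Φ + 4 * (X ^ 2 * (X * d⁄dX ℚ Φ)) - 2 * (X ^ 3 * (X * d⁄dX ℚ Φ))
        + 4 * (X ^ 4 * (X * d⁄dX ℚ Φ)) + X ^ 6 * (X * d⁄dX ℚ Φ)
        + Φ + X ^ 3 * Φ - 4 * (X ^ 4 * Φ) - 2 * (X ^ 6 * Φ) by ring] at h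
  simp only [map_add, map_sub, coeff_ofNat_mul, coeff_X_pow_mul', coeff_X_mul_derivative,
    coeff_one, coeff_X, coeff_X_pow] at h
  simp only [le_add_iff_nonneg_left, zero_le, ↓reduceIte, Nat.reduceSubDiff, add_tsub_cancel_right,
    Nat.add_eq_zero_iff, OfNat.ofNat_ne_zero, and_false, Nat.reduceEqDiff, mul_zero, add_zero] at h
  push_cast at h ⊢
  linear_combination h

theorem stmt_8 (Φ : ℚ⟦X⟧)
    (hΦ0 : constantCoeff Φ = 1)
    (hΦ : X * Φ ^ 2 + (1 - 2 * X - X ^ 3) * Φ - 1 = 0) :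
    ∀ l : ℕ, 6 ≤ l →
      ((l : ℚ) + 1) * coeff l Φ + 4 * ((l : ℚ) - 2) * coeff (l - 2) Φ
        - (2 * (l : ℚ) - 7) * coeff (l - 3) Φ + 4 * ((l : ℚ) - 5) * coeff (l - 4) Φ
        + ((l : ℚ) - 8) * coeff (l - 6) Φ = 0 :=
  stmt_8_general Φ hΦ
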